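/- arXiv:1707.01422 — 2 statements merged into one kernel-verified Lean document; each statement's English description precedes it below -/
import Mathlib

section
/- For every (t,x,y)∈ℝ×ℝ^{p_0}×ℝ^{p_1}, every v∈ℝ^{p_0} and every δ∈ℝ, the composite curve satisfies γ_{v,δ}(t,x,y) = (t, x, y + δ³ B_{1,0} v) − δ⁵ (0, Σ_{n=0}^∞ ((−1)^n δ^{2n}/(n+2)!) B^{n+2}(v,0)ᵀ), where the series converges absolutely. -/
noncomputable section

open Matrix

/-- Matrix exponential. -/
def mexp {n : Type*} [Fintype n] [DecidableEq n] (M : Matrix n n ℝ) : Matrix n n ℝ :=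
  NormedSpace.exp M

variable {p₀ p₁ : ℕ}

/-- `γ⁰_{v,δ}(t,x,y) := (t, x + δ v, y)`. -/
def gamma0 (v : Fin p₀ → ℝ) (δ : ℝ) (z : ℝ × (Fin p₀ → ℝ) × (Fin p₁ → ℝ)) :
    ℝ × (Fin p₀ → ℝ) × (Fin p₁ → ℝ) :=
  (z.1, z.2.1 + δ • v, z.2.2)

/-- `e^{δY}(t,x,y) := (t + δ, e^{δB}(x,y)ᵀ)`. -/
def expY (B : Matrix (Fin p₀ ⊕ Fin p₁) (Fin p₀ ⊕ Fin p₁) ℝ) (δ : ℝ)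
    (z : ℝ × (Fin p₀ → ℝ) × (Fin p₁ → ℝ)) : ℝ × (Fin p₀ → ℝ) × (Fin p₁ → ℝ) :=
  (z.1 + δ,
    fun i => (mexp (δ • B)).mulVec (Sum.elim z.2.1 z.2.2) (Sum.inl i),
    fun i => (mexp (δ • B)).mulVec (Sum.elim z.2.1 z.2.2) (Sum.inr i))

/-- `γ_{v,δ} := γ⁰_{B₀₀v,−δ³} ∘ e^{−δ²Y} ∘ γ⁰_{v,−δ} ∘ e^{δ²Y} ∘ γ⁰_{v,δ}`. -/
def gammaC (B : Matrix (Fin p₀ ⊕ Fin p₁) (Fin p₀ ⊕ Fin p₁) ℝ) (v : Fin p₀ → ℝ) (δ : ℝ) :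
    ℝ × (Fin p₀ → ℝ) × (Fin p₁ → ℝ) → ℝ × (Fin p₀ → ℝ) × (Fin p₁ → ℝ) :=
  gamma0 ((toBlocks₁₁ B).mulVec v) (-δ ^ 3) ∘ expY B (-δ ^ 2) ∘ gamma0 v (-δ) ∘
    expY B (δ ^ 2) ∘ gamma0 v δ

/-- `g_{v,δ} := γ⁰_{v′,δ⁵} ∘ γ_{v,δ}` where
`v′ := Σ_{n} ((−1)^n δ^{2n}/(n+2)!) (B^{n+2})₀₀ v`. -/
def gC (B : Matrix (Fin p₀ ⊕ Fin p₁) (Fin p₀ ⊕ Fin p₁) ℝ) (v : Fin p₀ → ℝ) (δ : ℝ) :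
    ℝ × (Fin p₀ → ℝ) × (Fin p₁ → ℝ) → ℝ × (Fin p₀ → ℝ) × (Fin p₁ → ℝ) :=
  gamma0 (∑' n : ℕ, ((-1 : ℝ) ^ n * δ ^ (2 * n) / (n + 2).factorial) •
      (toBlocks₁₁ (B ^ (n + 2))).mulVec v) (δ ^ 5) ∘ gammaC B v δ

/-- Euclidean norm on `ℝ^p`. -/
def enorm {p : ℕ} (x : Fin p → ℝ) : ℝ := Real.sqrt (∑ i, x i ^ 2)

/-! Since `e^{-δ²B}` inverts `e^{δ²B}`, the spatial part of `γ_{v,δ}(t,x,y)` is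
`(x + δv, y) - δ e^{-δ²B}(v,0) - δ³(B₀₀v, 0)`. Splitting off the first two terms of the
exponential series, `e^{-δ²B}(v,0) = (v,0) - δ²B(v,0) + δ⁴ Σₙ (-1)ⁿδ²ⁿ/(n+2)! Bⁿ⁺²(v,0)`, and the
remainder converges absolutely by comparison with the exponential series of `δ²‖B‖`. -/

section MatrixExponential

variable {ι : Type*} [Fintype ι] [DecidableEq ι]

open scoped Matrix.Norms.Operator in
theorem hasSum_mexp_mulVec (A : Matrix ι ι ℝ) (u : ι → ℝ) :
    HasSum (fun k : ℕ => (k.factorial : ℝ)⁻¹ • (A ^ k *ᵥ u)) (mexp A *ᵥ u) := by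
  have h := (NormedSpace.exp_series_hasSum_exp' (𝕂 := ℝ) A).map (mulVec.addMonoidHomLeft u)
    (continuous_id.matrix_mulVec continuous_const)
  simp only [mulVec.addMonoidHomLeft, AddMonoidHom.coe_mk, ZeroHom.coe_mk, Function.comp_def,
    smul_mulVec] at h
  exact h

theorem mexp_neg_smul_mul_mexp_smul (A : Matrix ι ι ℝ) (c : ℝ) :
    mexp ((-c) • A) * mexp (c • A) = 1 := by
  rw [mexp, mexp, ← exp_add_of_commute _ _ (((Commute.refl A).smul_left _).smul_right _),
    ← add_smul, neg_add_cancel, zero_smul, NormedSpace.exp_zero]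

theorem hasSum_pow_add_two_mulVec_mexp_smul (A : Matrix ι ι ℝ) (u : ι → ℝ) (c : ℝ) :
    HasSum (fun n : ℕ => (c ^ (n + 2) / (n + 2).factorial) • (A ^ (n + 2) *ᵥ u))
      (mexp (c • A) *ᵥ u - u - c • (A *ᵥ u)) := by
  simpa [Finset.sum_range_succ, smul_smul, div_eq_inv_mul, smul_pow, smul_mulVec, sub_sub] using
    (hasSum_nat_add_iff' 2).mpr (hasSum_mexp_mulVec (c • A) u)

open scoped Matrix.Norms.Operator in
theorem summable_norm_pow_add_two_mulVec_div_factorial (A : Matrix ι ι ℝ) (u : ι → ℝ) (δ : ℝ) :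
    Summable fun n : ℕ =>
      ‖((-1 : ℝ) ^ n * δ ^ (2 * n) / (n + 2).factorial) • (A ^ (n + 2) *ᵥ u)‖ := by
  refine Summable.of_nonneg_of_le (fun n => norm_nonneg _) (fun n => ?_)
    ((Real.summable_pow_div_factorial (δ ^ 2 * ‖A‖)).mul_left (‖A‖ ^ 2 * ‖u‖))
  have hcoeff : ‖(-1 : ℝ) ^ n * δ ^ (2 * n) / (n + 2).factorial‖ ≤ (δ ^ 2) ^ n / n.factorial := by
    rw [norm_div, norm_mul, norm_pow, norm_neg, norm_one, one_pow, one_mul, norm_pow,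
      Real.norm_eq_abs, pow_mul, ← abs_pow, abs_sq, RCLike.norm_natCast]
    gcongr
    omega
  have hvec : ‖A ^ (n + 2) *ᵥ u‖ ≤ ‖A‖ ^ (n + 2) * ‖u‖ :=
    (linfty_opNorm_mulVec _ _).trans (by gcongr; exact norm_pow_le' A (by omega))
  calc _ ≤ (δ ^ 2) ^ n / n.factorial * (‖A‖ ^ (n + 2) * ‖u‖) := by
        rw [norm_smul]; gcongr
    _ = _ := by ring

theorem mexp_neg_sq_smul_mulVec (A : Matrix ι ι ℝ) (u : ι → ℝ) (δ : ℝ) :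
    mexp ((-δ ^ 2) • A) *ᵥ u = u - δ ^ 2 • (A *ᵥ u) + δ ^ 4 •
      ∑' n : ℕ, ((-1 : ℝ) ^ n * δ ^ (2 * n) / (n + 2).factorial) • (A ^ (n + 2) *ᵥ u) := by
  have hS :=
    (summable_norm_pow_add_two_mulVec_div_factorial A u δ).of_norm.hasSum.const_smul (δ ^ 4)
  have hR := hasSum_pow_add_two_mulVec_mexp_smul A u (-δ ^ 2)
  have hcoeff (n : ℕ) : (-δ ^ 2) ^ (n + 2) / ((n + 2).factorial : ℝ) =
      δ ^ 4 * ((-1) ^ n * δ ^ (2 * n) / (n + 2).factorial) := by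
    rw [neg_pow, pow_add, pow_mul]; ring
  simp only [hcoeff, mul_smul] at hR
  rw [hS.unique hR]
  module

end MatrixExponential

theorem mulVec_sum_elim_zero {R l m n o : Type*} [Fintype n] [Fintype o]
    [NonUnitalNonAssocSemiring R] (A : Matrix (l ⊕ m) (n ⊕ o) R) (v : n → R) :
    A *ᵥ Sum.elim v 0 = Sum.elim (toBlocks₁₁ A *ᵥ v) (toBlocks₂₁ A *ᵥ v) := by
  conv_lhs => rw [← fromBlocks_toBlocks A, fromBlocks_mulVec]
  simp

theorem gammaC_apply (B : Matrix (Fin p₀ ⊕ Fin p₁) (Fin p₀ ⊕ Fin p₁) ℝ) (v : Fin p₀ → ℝ)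
    (δ t : ℝ) (x : Fin p₀ → ℝ) (y : Fin p₁ → ℝ) :
    gammaC B v δ (t, x, y) =
      let W := mexp ((-δ ^ 2) • B) *ᵥ
        (mexp (δ ^ 2 • B) *ᵥ Sum.elim (x + δ • v) y - δ • Sum.elim v 0)
      (t, (fun i => W (Sum.inl i)) - δ ^ 3 • toBlocks₁₁ B *ᵥ v, fun i => W (Sum.inr i)) := by
  have hshift (w : Fin p₀ ⊕ Fin p₁ → ℝ) :
      Sum.elim ((fun i => w (Sum.inl i)) + (-δ) • v) (fun i => w (Sum.inr i)) =
        w - δ • Sum.elim v 0 := by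
    ext (i | i) <;> simp [sub_eq_add_neg]
  simp only [gammaC, Function.comp_apply, gamma0, expY]
  rw [hshift]
  simp [sub_eq_add_neg]

theorem stmt_1_general {p₀ p₁ : ℕ}
    (B : Matrix (Fin p₀ ⊕ Fin p₁) (Fin p₀ ⊕ Fin p₁) ℝ)
    (t : ℝ) (x : Fin p₀ → ℝ) (y : Fin p₁ → ℝ) (v : Fin p₀ → ℝ) (δ : ℝ) :
    (Summable fun n : ℕ => ‖((-1 : ℝ) ^ n * δ ^ (2 * n) / (n + 2).factorial) •
        (B ^ (n + 2)).mulVec (Sum.elim v 0)‖) ∧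
      gammaC B v δ (t, x, y) =
        (t,
         x - δ ^ 5 • fun i => (∑' n : ℕ, ((-1 : ℝ) ^ n * δ ^ (2 * n) / (n + 2).factorial) •
            (B ^ (n + 2)).mulVec (Sum.elim v 0)) (Sum.inl i),
         (y + δ ^ 3 • (toBlocks₂₁ B).mulVec v) -
           δ ^ 5 • fun i => (∑' n : ℕ, ((-1 : ℝ) ^ n * δ ^ (2 * n) / (n + 2).factorial) •
            (B ^ (n + 2)).mulVec (Sum.elim v 0)) (Sum.inr i)) := by
  refine ⟨summable_norm_pow_add_two_mulVec_div_factorial B _ δ, ?_⟩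
  set S := ∑' n : ℕ, ((-1 : ℝ) ^ n * δ ^ (2 * n) / (n + 2).factorial) •
    (B ^ (n + 2)).mulVec (Sum.elim v 0)
  have hW : mexp ((-δ ^ 2) • B) *ᵥ
      (mexp (δ ^ 2 • B) *ᵥ Sum.elim (x + δ • v) y - δ • Sum.elim v 0) =
        Sum.elim x y + δ ^ 3 • Sum.elim (toBlocks₁₁ B *ᵥ v) (toBlocks₂₁ B *ᵥ v) - δ ^ 5 • S := by
    rw [mulVec_sub, mulVec_mulVec, mexp_neg_smul_mul_mexp_smul, one_mulVec, mulVec_smul,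
      mexp_neg_sq_smul_mulVec, mulVec_sum_elim_zero]
    ext (i | i) <;>
      (simp only [smul_add, Pi.sub_apply, Pi.add_apply, Pi.smul_apply, Pi.zero_apply,
        Sum.elim_inl, Sum.elim_inr, smul_eq_mul]; ring)
  rw [gammaC_apply, hW]
  refine Prod.ext rfl (Prod.ext (funext fun i => ?_) (funext fun i => ?_))
  · simp only [Pi.sub_apply, Pi.add_apply, Pi.smul_apply, Sum.elim_inl, smul_eq_mul]
    ring
  · simp only [Pi.sub_apply, Pi.add_apply, Pi.smul_apply, Sum.elim_inr, smul_eq_mul]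

/-- explicit form of the composite curve `γ_{v,δ}`, with absolutely
convergent series. -/
theorem stmt_1 {p₀ p₁ : ℕ} (hp₀ : 1 ≤ p₀) (hp₁ : 1 ≤ p₁)
    (B : Matrix (Fin p₀ ⊕ Fin p₁) (Fin p₀ ⊕ Fin p₁) ℝ)
    (t : ℝ) (x : Fin p₀ → ℝ) (y : Fin p₁ → ℝ) (v : Fin p₀ → ℝ) (δ : ℝ) :
    (Summable fun n : ℕ => ‖((-1 : ℝ) ^ n * δ ^ (2 * n) / (n + 2).factorial) •
        (B ^ (n + 2)).mulVec (Sum.elim v 0)‖) ∧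
      gammaC B v δ (t, x, y) =
        (t,
         x - δ ^ 5 • fun i => (∑' n : ℕ, ((-1 : ℝ) ^ n * δ ^ (2 * n) / (n + 2).factorial) •
            (B ^ (n + 2)).mulVec (Sum.elim v 0)) (Sum.inl i),
         (y + δ ^ 3 • (toBlocks₂₁ B).mulVec v) -
           δ ^ 5 • fun i => (∑' n : ℕ, ((-1 : ℝ) ^ n * δ ^ (2 * n) / (n + 2).factorial) •
            (B ^ (n + 2)).mulVec (Sum.elim v 0)) (Sum.inr i)) :=
  stmt_1_general B t x y v δ
end
end

section
/- There exist δ̄ > 0 and ε > 0, depending only on B, such that for every η∈ℝ^p with |η| ≤ ε the equation δ³ R(δ,v) = η admits a solution (δ,v) ∈ [0,δ̄] × S^{p−1}, where S^{p−1} is the unit sphere of ℝ^p. -/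
/-!
Write `R(δ, v) = M(δ) v`, where `M(δ)` is the bottom-left block of the matrix series
`Σ (-1)ⁿ δ²ⁿ / (n+1)! Bⁿ⁺¹`. This series converges locally uniformly, so `M` is continuous, and
`M(0) = B₁₀` is invertible; hence `M(δ)` is invertible for `δ ∈ [0, δ̄]`. For small `η` the
continuous function `δ ↦ |M(δ)⁻¹ η| - δ³` is `≥ 0` at `0` and `≤ 0` at `δ̄`, so by the intermediate
value theorem `|M(δ)⁻¹ η| = δ³` for some `δ`, and `v = δ⁻³ M(δ)⁻¹ η` is a unit solution
(if `δ = 0` then `η = 0` and any unit vector works).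
-/

noncomputable section

open Matrix

/-- `R(δ,v) := Σ_{n=0}^∞ ((−1)^n δ^{2n}/(n+1)!) (B^{n+1})₁₀ v`, where `(M)₁₀` is the
bottom-left `p × p` block. -/
def Rfun {p : ℕ} (B : Matrix (Fin p ⊕ Fin p) (Fin p ⊕ Fin p) ℝ) (δ : ℝ)
    (v : Fin p → ℝ) : Fin p → ℝ :=
  ∑' n : ℕ, ((-1 : ℝ) ^ n * δ ^ (2 * n) / (n + 1).factorial) •
    (toBlocks₂₁ (B ^ (n + 1))).mulVec v

/-- Euclidean norm on `ℝ^p`. -/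
def eucEnorm {p : ℕ} (x : Fin p → ℝ) : ℝ := Real.sqrt (∑ i, x i ^ 2)

section EuclideanNorm

variable {p : ℕ}

lemma eucEnorm_eq_norm_toLp (x : Fin p → ℝ) : eucEnorm x = ‖WithLp.toLp 2 x‖ := by
  simp [eucEnorm, EuclideanSpace.norm_eq]

lemma eucEnorm_nonneg (x : Fin p → ℝ) : 0 ≤ eucEnorm x := Real.sqrt_nonneg _

lemma continuous_eucEnorm : Continuous (eucEnorm (p := p)) := by
  simp only [funext eucEnorm_eq_norm_toLp]
  exact (PiLp.continuous_toLp 2 _).norm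

lemma eucEnorm_smul (c : ℝ) (x : Fin p → ℝ) : eucEnorm (c • x) = |c| * eucEnorm x := by
  simp [eucEnorm_eq_norm_toLp, norm_smul]

lemma eucEnorm_eq_zero {x : Fin p → ℝ} : eucEnorm x = 0 ↔ x = 0 := by
  simp [eucEnorm_eq_norm_toLp]

lemma eucEnorm_single (i : Fin p) : eucEnorm (Pi.single i 1) = 1 := by
  simp [eucEnorm_eq_norm_toLp]

lemma eucEnorm_mulVec_le (A : Matrix (Fin p) (Fin p) ℝ) (x : Fin p → ℝ) :
    eucEnorm (A *ᵥ x) ≤ ‖toEuclideanCLM (𝕜 := ℝ) A‖ * eucEnorm x := by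
  simpa [eucEnorm_eq_norm_toLp] using (toEuclideanCLM (𝕜 := ℝ) A).le_opNorm (WithLp.toLp 2 x)

end EuclideanNorm

section Series

attribute [local instance] Matrix.linftyOpNormedRing Matrix.linftyOpNormedAlgebra

variable {p : ℕ} (B : Matrix (Fin p ⊕ Fin p) (Fin p ⊕ Fin p) ℝ)

def Rterm (δ : ℝ) (n : ℕ) : Matrix (Fin p ⊕ Fin p) (Fin p ⊕ Fin p) ℝ :=
  ((-1 : ℝ) ^ n * δ ^ (2 * n) / (n + 1).factorial) • B ^ (n + 1)

def Rmat (δ : ℝ) : Matrix (Fin p ⊕ Fin p) (Fin p ⊕ Fin p) ℝ := ∑' n, Rterm B δ n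

lemma norm_Rterm_le {r δ : ℝ} (hδ : |δ| ≤ r) (n : ℕ) :
    ‖Rterm B δ n‖ ≤ ‖B‖ * ((r ^ 2 * ‖B‖) ^ n / n.factorial) := by
  have hcoeff : ‖(-1 : ℝ) ^ n * δ ^ (2 * n) / (n + 1).factorial‖ ≤ (r ^ 2) ^ n / n.factorial := by
    rw [norm_div, norm_mul, norm_pow, norm_pow, norm_neg, norm_one, one_pow, one_mul,
      Real.norm_natCast, pow_mul, Real.norm_eq_abs]
    gcongr
    omega
  calc ‖Rterm B δ n‖ ≤ (r ^ 2) ^ n / n.factorial * ‖B‖ ^ (n + 1) := by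
        rw [Rterm, norm_smul]
        gcongr
        exact norm_pow_le' B n.succ_pos
    _ = ‖B‖ * ((r ^ 2 * ‖B‖) ^ n / n.factorial) := by ring

lemma summable_Rterm (δ : ℝ) : Summable (Rterm B δ) :=
  .of_norm_bounded ((Real.summable_pow_div_factorial _).mul_left _) (norm_Rterm_le B le_rfl)

lemma continuous_Rmat : Continuous (Rmat B) := by
  have hIcc : ∀ r : ℝ, ContinuousOn (Rmat B) (Set.Icc (-r) r) := fun r =>
    continuousOn_tsum (fun n => by unfold Rterm; fun_prop)
      ((Real.summable_pow_div_factorial _).mul_left _)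
      (fun n δ hδ => norm_Rterm_le B (abs_le.mpr hδ) n)
  refine continuous_iff_continuousAt.mpr fun δ => (hIcc (|δ| + 1)).continuousAt (Icc_mem_nhds ?_ ?_)
  · linarith [neg_abs_le δ]
  · linarith [le_abs_self δ]

lemma Rmat_zero : Rmat B 0 = B := by
  rw [Rmat, tsum_eq_single 0 fun n hn => by simp [Rterm, hn]]
  simp [Rterm]

lemma Rfun_eq_mulVec (δ : ℝ) (v : Fin p → ℝ) : Rfun B δ v = toBlocks₂₁ (Rmat B δ) *ᵥ v := by
  let L : Matrix (Fin p ⊕ Fin p) (Fin p ⊕ Fin p) ℝ →ₗ[ℝ] Fin p → ℝ :=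
    { toFun := fun A => toBlocks₂₁ A *ᵥ v
      map_add' := fun A C => add_mulVec (toBlocks₂₁ A) (toBlocks₂₁ C) v
      map_smul' := fun c A => smul_mulVec c (toBlocks₂₁ A) v }
  exact (((summable_Rterm B δ).hasSum.map L L.continuous_of_finiteDimensional).congr_fun
    fun n => (map_smul L _ _).symm).tsum_eq

end Series

section PerturbedInverse

lemma exists_pos_forall_Icc_isUnit {n : Type*} [Fintype n] [DecidableEq n]
    {M : ℝ → Matrix n n ℝ} (hM : Continuous M) (h0 : IsUnit (M 0)) :
    ∃ δbar > 0, ∀ δ ∈ Set.Icc 0 δbar, IsUnit (M δ) := by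
  have hdet : ∀ᶠ δ in nhds 0, (M δ).det ≠ 0 :=
    hM.matrix_det.continuousAt.eventually_ne ((isUnit_iff_isUnit_det _).mp h0).ne_zero
  obtain ⟨r, hr, hball⟩ := Metric.eventually_nhds_iff.mp hdet
  refine ⟨r / 2, by positivity, fun δ hδ => (isUnit_iff_isUnit_det _).mpr (hball ?_).isUnit⟩
  rw [Real.dist_eq, sub_zero, abs_of_nonneg hδ.1]
  linarith [hδ.2]

variable {p : ℕ}

lemma exists_mem_Icc_eucEnorm_inv_mulVec_eq_cube {M : ℝ → Matrix (Fin p) (Fin p) ℝ}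
    {δbar : ℝ} (hδbar : 0 ≤ δbar) (hM : ContinuousOn M (Set.Icc 0 δbar))
    (hunit : ∀ δ ∈ Set.Icc 0 δbar, IsUnit (M δ)) {η : Fin p → ℝ}
    (hη : eucEnorm ((M δbar)⁻¹ *ᵥ η) ≤ δbar ^ 3) :
    ∃ δ ∈ Set.Icc 0 δbar, eucEnorm ((M δ)⁻¹ *ᵥ η) = δ ^ 3 := by
  have hinv : ContinuousOn (fun δ => (M δ)⁻¹) (Set.Icc 0 δbar) := fun δ hδ => by
    refine (continuousAt_matrix_inv _ ?_).comp_continuousWithinAt (hM δ hδ)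
    rw [Ring.inverse_eq_inv']
    exact continuousAt_inv₀ ((isUnit_iff_isUnit_det _).mp (hunit δ hδ)).ne_zero
  have hmulVec : Continuous fun A : Matrix (Fin p) (Fin p) ℝ => A *ᵥ η :=
    continuous_id.matrix_mulVec continuous_const
  have hφ : ContinuousOn (fun δ => eucEnorm ((M δ)⁻¹ *ᵥ η) - δ ^ 3) (Set.Icc 0 δbar) :=
    ((continuous_eucEnorm.comp hmulVec).comp_continuousOn hinv).sub (continuousOn_pow 3)
  have hsign : (0 : ℝ) ∈ Set.Icc (eucEnorm ((M δbar)⁻¹ *ᵥ η) - δbar ^ 3)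
      (eucEnorm ((M 0)⁻¹ *ᵥ η) - 0 ^ 3) :=
    ⟨by linarith, by simpa using eucEnorm_nonneg _⟩
  obtain ⟨δ, hδ, hzero⟩ := intermediate_value_Icc' hδbar hφ hsign
  exact ⟨δ, hδ, sub_eq_zero.mp hzero⟩

lemma exists_eucEnorm_eq_one_cube_smul_mulVec_eq (hp : 1 ≤ p) {A : Matrix (Fin p) (Fin p) ℝ}
    (hA : IsUnit A) {η : Fin p → ℝ} {δ : ℝ} (hδ : 0 ≤ δ) (h : eucEnorm (A⁻¹ *ᵥ η) = δ ^ 3) :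
    ∃ v, eucEnorm v = 1 ∧ δ ^ 3 • (A *ᵥ v) = η := by
  have hAA : A *ᵥ (A⁻¹ *ᵥ η) = η := by
    rw [mulVec_mulVec, mul_nonsing_inv _ ((isUnit_iff_isUnit_det _).mp hA), one_mulVec]
  rcases hδ.eq_or_lt with rfl | hpos
  · have hη : η = 0 := by
      rw [← hAA, (eucEnorm_eq_zero (x := A⁻¹ *ᵥ η)).mp (by simpa using h), mulVec_zero]
    exact ⟨Pi.single ⟨0, hp⟩ 1, eucEnorm_single _, by simp [hη]⟩
  · refine ⟨(δ ^ 3)⁻¹ • (A⁻¹ *ᵥ η), ?_, ?_⟩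
    · rw [eucEnorm_smul, h, abs_inv, abs_of_pos (by positivity), inv_mul_cancel₀ (by positivity)]
    · rw [mulVec_smul, smul_smul, mul_inv_cancel₀ (by positivity), one_smul, hAA]

theorem exists_cube_smul_mulVec_eq_of_continuous (hp : 1 ≤ p)
    {M : ℝ → Matrix (Fin p) (Fin p) ℝ} (hM : Continuous M) (h0 : IsUnit (M 0)) :
    ∃ δbar > (0 : ℝ), ∃ ε > (0 : ℝ), ∀ η : Fin p → ℝ, eucEnorm η ≤ ε →
      ∃ δ ∈ Set.Icc 0 δbar, ∃ v, eucEnorm v = 1 ∧ δ ^ 3 • (M δ *ᵥ v) = η := by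
  obtain ⟨δbar, hδbar, hunit⟩ := exists_pos_forall_Icc_isUnit hM h0
  obtain ⟨K, hK, hbound⟩ : ∃ K ≥ 0, ∀ x, eucEnorm ((M δbar)⁻¹ *ᵥ x) ≤ K * eucEnorm x :=
    ⟨_, norm_nonneg _, eucEnorm_mulVec_le _⟩
  refine ⟨δbar, hδbar, δbar ^ 3 / (K + 1), by positivity, fun η hη => ?_⟩
  have hbar : eucEnorm ((M δbar)⁻¹ *ᵥ η) ≤ δbar ^ 3 := calc
    _ ≤ K * eucEnorm η := hbound η
    _ ≤ (K + 1) * (δbar ^ 3 / (K + 1)) := by gcongr <;> linarith [eucEnorm_nonneg η]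
    _ = δbar ^ 3 := mul_div_cancel₀ _ (by positivity)
  obtain ⟨δ, hδ, heq⟩ :=
    exists_mem_Icc_eucEnorm_inv_mulVec_eq_cube hδbar.le hM.continuousOn hunit hbar
  exact ⟨δ, hδ, exists_eucEnorm_eq_one_cube_smul_mulVec_eq hp (hunit δ hδ) hδ.1 heq⟩

end PerturbedInverse

/-- if `B₁₀` is invertible, there exist `δ̄ > 0` and `ε > 0`, depending
only on `B`, such that for every `η` with `|η| ≤ ε` the equation `δ³ R(δ,v) = η` has a
solution `(δ,v) ∈ [0,δ̄] × S^{p−1}`. -/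
theorem stmt_4 {p : ℕ} (hp : 1 ≤ p)
    (B : Matrix (Fin p ⊕ Fin p) (Fin p ⊕ Fin p) ℝ)
    (hinv : IsUnit (toBlocks₂₁ B)) :
    ∃ δbar > (0 : ℝ), ∃ ε > (0 : ℝ), ∀ η : Fin p → ℝ, eucEnorm η ≤ ε →
      ∃ δ : ℝ, δ ∈ Set.Icc (0 : ℝ) δbar ∧ ∃ v : Fin p → ℝ, eucEnorm v = 1 ∧
        δ ^ 3 • Rfun B δ v = η := by
  have hM : Continuous fun δ => toBlocks₂₁ (Rmat B δ) :=
    (continuous_Rmat B).matrix_submatrix Sum.inr Sum.inl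
  obtain ⟨δbar, hδbar, ε, hε, hsol⟩ :=
    exists_cube_smul_mulVec_eq_of_continuous hp hM (by rwa [Rmat_zero])
  refine ⟨δbar, hδbar, ε, hε, fun η hη => ?_⟩
  obtain ⟨δ, hδ, v, hv, hδv⟩ := hsol η hη
  exact ⟨δ, hδ, v, hv, by rwa [Rfun_eq_mulVec]⟩
end
end
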